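/- arXiv:1905.00369 — 6 statements merged into one kernel-verified Lean document; each statement's English description precedes it below -/
import Mathlib

section
/- Let (Ω, F, P) be a probability space with a filtration {∅,Ω} = F₀ ⊆ F₁ ⊆ ⋯ ⊆ F_r ⊆ F, and let (X_i)_{i=0}^r be a martingale difference with respect to it: X₀ = 0, each X_i is F_i-measurable and bounded, and E[X_i | F_{i−1}] = 0 almost surely for 1 ≤ i ≤ r. Suppose there exist reals M > 0 and σ > 0 such that |X_i| ≤ M almost surely for all 1 ≤ i ≤ r and Σ_{i=1}^r E[X_i² | F_{i−1}] ≤ σ² almost surely. Define X = Σ_{i=1}^r X_i. Then for every t ≥ 0: Pr[X ≥ t] ≤ exp(−(σ²/M²)·𝒞(t·M/σ²)). -/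
open MeasureTheory Real
open scoped BigOperators

noncomputable section

def bennett (x : ℝ) : ℝ := (x + 1) * Real.log (x + 1) - x

/-! Write `S_n = ∑_{i ≤ n} X_i`, `V_n = ∑_{i ≤ n} E[X_i² | F_{i-1}]` and
`φ(λ) = (e^{λM} - 1 - λM)/M²`. Since `(eˣ - 1 - x)/x²` is nondecreasing,
`e^{λY} ≤ 1 + λY + φ(λ)Y²` whenever `|Y| ≤ M`; for a martingale difference this gives
`E[e^{λX_{n+1}} | F_n] ≤ 1 + φ(λ) E[X_{n+1}² | F_n] ≤ exp (φ(λ) E[X_{n+1}² | F_n])`, so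
`exp (λS_n - φ(λ)V_n)` is a supermartingale started at `1`. With `V_r ≤ σ²` the moment generating
function of `S_r` at `λ` is at most `exp (φ(λ)σ²)`, and the Chernoff bound at
`λ = log (1 + tM/σ²)/M` gives the Bennett exponent. -/

open ProbabilityTheory Finset

def bennettCoeff (l M : ℝ) : ℝ := (exp (l * M) - 1 - l * M) / M ^ 2

lemma bennettCoeff_nonneg (l M : ℝ) : 0 ≤ bennettCoeff l M :=
  div_nonneg (by linarith [add_one_le_exp (l * M)]) (sq_nonneg M)

lemma exp_sub_one_sub_eq_tsum (x : ℝ) :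
    exp x - 1 - x = ∑' n : ℕ, x ^ (n + 2) / ((n + 2).factorial : ℝ) := by
  rw [exp_eq_exp_ℝ, NormedSpace.exp_eq_tsum_div]
  beta_reduce
  rw [← (summable_pow_div_factorial x).sum_add_tsum_nat_add 2]
  simp only [sum_range_succ, range_one, sum_singleton, pow_zero, pow_one, Nat.factorial_zero,
    Nat.factorial_one, Nat.cast_one, div_one]
  ring

lemma exp_sub_one_sub_mul_sq_le {a b : ℝ} (hab : |a| ≤ b) :
    (exp a - 1 - a) * b ^ 2 ≤ (exp b - 1 - b) * a ^ 2 := by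
  rw [exp_sub_one_sub_eq_tsum, exp_sub_one_sub_eq_tsum, ← tsum_mul_right, ← tsum_mul_right]
  refine Summable.tsum_le_tsum (fun n => ?_)
    (((summable_nat_add_iff 2).2 (summable_pow_div_factorial a)).mul_right _)
    (((summable_nat_add_iff 2).2 (summable_pow_div_factorial b)).mul_right _)
  rw [div_mul_eq_mul_div, div_mul_eq_mul_div]
  refine div_le_div_of_nonneg_right ?_ (Nat.cast_nonneg _)
  calc a ^ (n + 2) * b ^ 2 ≤ |a| ^ n * a ^ 2 * b ^ 2 := by
        rw [← sq_abs a, ← pow_add, ← abs_pow]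
        exact mul_le_mul_of_nonneg_right (le_abs_self _) (sq_nonneg b)
    _ ≤ b ^ n * a ^ 2 * b ^ 2 := by gcongr
    _ = b ^ (n + 2) * a ^ 2 := by ring

lemma exp_mul_le_one_add_add_bennettCoeff_mul_sq {l x M : ℝ} (hl : 0 ≤ l) (hM : 0 < M)
    (hx : |x| ≤ M) : exp (l * x) ≤ 1 + l * x + bennettCoeff l M * x ^ 2 := by
  rcases hl.eq_or_lt with rfl | hl
  · simp [bennettCoeff]
  have key := exp_sub_one_sub_mul_sq_le (a := l * x) (b := l * M)
    (by rw [abs_mul, abs_of_pos hl]; gcongr)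
  have hM2 : (exp (l * x) - 1 - l * x) * M ^ 2 ≤ (exp (l * M) - 1 - l * M) * x ^ 2 := by
    refine le_of_mul_le_mul_right ?_ (pow_pos hl 2)
    calc _ = (exp (l * x) - 1 - l * x) * (l * M) ^ 2 := by ring
      _ ≤ (exp (l * M) - 1 - l * M) * (l * x) ^ 2 := key
      _ = _ := by ring
  have := (le_div_iff₀ (by positivity : (0 : ℝ) < M ^ 2)).2 hM2
  rw [bennettCoeff, div_mul_eq_mul_div]
  linarith

section CondExp

variable {Ω : Type*} {m mΩ : MeasurableSpace Ω} {P : Measure Ω}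

lemma integral_mul_le_integral_mul_of_condExp_le (hm : m ≤ mΩ) [SigmaFinite (P.trim hm)]
    {f Z W : Ω → ℝ} (hf : StronglyMeasurable[m] f) (hf0 : 0 ≤ᵐ[P] f) (hZ : Integrable Z P)
    (hfZ : Integrable (f * Z) P) (hfW : Integrable (f * W) P) (hZW : P[Z|m] ≤ᵐ[P] W) :
    ∫ ω, (f * Z) ω ∂P ≤ ∫ ω, (f * W) ω ∂P := by
  rw [← integral_condExp hm]
  refine integral_mono_ae integrable_condExp hfW ?_
  filter_upwards [condExp_mul_of_stronglyMeasurable_left hf hfZ hZ, hZW, hf0] with ω hpull h h0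
  rw [hpull, Pi.mul_apply, Pi.mul_apply]
  exact mul_le_mul_of_nonneg_left h h0

variable [IsFiniteMeasure P]

lemma integrable_exp_of_ae_le {h : Ω → ℝ} (hh : AEStronglyMeasurable h P) {c : ℝ}
    (hc : ∀ᵐ ω ∂P, h ω ≤ c) : Integrable (fun ω => exp (h ω)) P := by
  refine .of_bound (continuous_exp.comp_aestronglyMeasurable hh) (exp c) ?_
  filter_upwards [hc] with ω h
  rw [norm_of_nonneg (exp_nonneg _)]
  exact exp_le_exp.2 h

lemma integrable_exp_mul_of_abs_le {Y : Ω → ℝ} (hY : AEStronglyMeasurable Y P) {l M : ℝ}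
    (hl : 0 ≤ l) (hYM : ∀ᵐ ω ∂P, |Y ω| ≤ M) : Integrable (fun ω => exp (l * Y ω)) P := by
  refine integrable_exp_of_ae_le (hY.const_mul l) (c := l * M) ?_
  filter_upwards [hYM] with ω h
  exact mul_le_mul_of_nonneg_left ((le_abs_self _).trans h) hl

lemma condExp_exp_mul_le_exp_bennettCoeff_mul (hm : m ≤ mΩ) {Y : Ω → ℝ}
    (hY : AEStronglyMeasurable Y P) {l M : ℝ} (hl : 0 ≤ l) (hM : 0 < M)
    (hYM : ∀ᵐ ω ∂P, |Y ω| ≤ M) (hY0 : P[Y|m] =ᵐ[P] 0) :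
    P[fun ω => exp (l * Y ω)|m] ≤ᵐ[P]
      fun ω => exp (bennettCoeff l M * P[fun ω => Y ω ^ 2|m] ω) := by
  set g := bennettCoeff l M
  have hYint : Integrable Y P := .of_bound hY M hYM
  have hY2int : Integrable (fun ω => Y ω ^ 2) P := by
    refine .of_bound (hY.pow 2) (M ^ 2) ?_
    filter_upwards [hYM] with ω h
    rw [norm_pow, norm_eq_abs]
    exact pow_le_pow_left₀ (abs_nonneg _) h 2
  have hlin_int : Integrable (fun ω => 1 + l * Y ω) P :=
    (integrable_const 1).add (hYint.const_mul l)
  have hq_int : Integrable (fun ω => 1 + l * Y ω + g * Y ω ^ 2) P :=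
    hlin_int.add (hY2int.const_mul g)
  have hq : P[fun ω => 1 + l * Y ω + g * Y ω ^ 2|m] =ᵐ[P]
      fun ω => 1 + g * P[fun ω => Y ω ^ 2|m] ω := by
    have hsplit : P[fun ω => 1 + l * Y ω + g * Y ω ^ 2|m] =ᵐ[P]
        P[fun ω => 1 + l * Y ω|m] + P[fun ω => g * Y ω ^ 2|m] :=
      condExp_add hlin_int (hY2int.const_mul g) m
    have hsplit_lin : P[fun ω => 1 + l * Y ω|m] =ᵐ[P]
        P[fun _ => (1 : ℝ)|m] + P[fun ω => l * Y ω|m] :=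
      condExp_add (integrable_const 1) (hYint.const_mul l) m
    have hlY : P[fun ω => l * Y ω|m] =ᵐ[P] fun ω => l * P[Y|m] ω := condExp_smul l Y m
    have hgY : P[fun ω => g * Y ω ^ 2|m] =ᵐ[P] fun ω => g * P[fun ω => Y ω ^ 2|m] ω :=
      condExp_smul g (fun ω => Y ω ^ 2) m
    filter_upwards [hsplit, hsplit_lin, hlY, hgY, hY0] with ω h h_lin h_lY h_gY h_Y0
    rw [h, Pi.add_apply, h_lin, Pi.add_apply, condExp_const hm, h_lY, h_gY, h_Y0, Pi.zero_apply,
      mul_zero, add_zero]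
  filter_upwards [condExp_mono (integrable_exp_mul_of_abs_le hY hl hYM) hq_int
    (by filter_upwards [hYM] with ω h using exp_mul_le_one_add_add_bennettCoeff_mul_sq hl hM h),
    hq] with ω hmono hqω
  rw [hqω] at hmono
  linarith [add_one_le_exp (g * P[fun ω => Y ω ^ 2|m] ω)]

end CondExp

section Martingale

variable {Ω : Type*} {mΩ : MeasurableSpace Ω} {P : Measure Ω} {ℱ : ℕ → MeasurableSpace Ω}
  {X : ℕ → Ω → ℝ} {r n : ℕ} {l M : ℝ}

def condVarSum (P : Measure Ω) (ℱ : ℕ → MeasurableSpace Ω) (X : ℕ → Ω → ℝ) (n : ℕ) (ω : Ω) :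
    ℝ :=
  ∑ i ∈ Icc 1 n, P[fun ω' => X i ω' ^ 2|ℱ (i - 1)] ω

def bennettExpProcess (P : Measure Ω) (ℱ : ℕ → MeasurableSpace Ω) (X : ℕ → Ω → ℝ) (l M : ℝ)
    (n : ℕ) (ω : Ω) : ℝ :=
  exp (l * ∑ i ∈ Icc 1 n, X i ω - bennettCoeff l M * condVarSum P ℱ X n ω)

lemma condVarSum_nonneg : 0 ≤ᵐ[P] condVarSum P ℱ X n := by
  have h : ∀ᵐ ω ∂P, ∀ i ∈ Icc 1 n, 0 ≤ P[fun ω' => X i ω' ^ 2|ℱ (i - 1)] ω :=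
    (Finset.eventually_all _).2 fun i _ => condExp_nonneg (ae_of_all _ fun _ => sq_nonneg _)
  filter_upwards [h] with ω hω using Finset.sum_nonneg hω

lemma condVarSum_succ (ω : Ω) :
    condVarSum P ℱ X (n + 1) ω = condVarSum P ℱ X n ω + P[fun ω' => X (n + 1) ω' ^ 2|ℱ n] ω :=
  Finset.sum_Icc_succ_top (Nat.le_add_left 1 n) _

lemma stronglyMeasurable_condVarSum (hmono : ∀ i j, i ≤ j → j ≤ r → ℱ i ≤ ℱ j) (hn : n ≤ r) :
    StronglyMeasurable[ℱ n] (condVarSum P ℱ X n) := by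
  refine Finset.stronglyMeasurable_fun_sum _ fun i hi => ?_
  exact stronglyMeasurable_condExp.mono (hmono _ n (by grind) hn)

lemma stronglyMeasurable_sum_Icc (hmono : ∀ i j, i ≤ j → j ≤ r → ℱ i ≤ ℱ j)
    (hadapted : ∀ i ≤ r, StronglyMeasurable[ℱ i] (X i)) (hn : n ≤ r) :
    StronglyMeasurable[ℱ n] fun ω => ∑ i ∈ Icc 1 n, X i ω := by
  refine Finset.stronglyMeasurable_fun_sum _ fun i hi => ?_
  have hin : i ≤ n := (Finset.mem_Icc.1 hi).2
  exact (hadapted i (hin.trans hn)).mono (hmono i n hin hn)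

lemma sum_Icc_le (hbdd : ∀ i, 1 ≤ i → i ≤ r → ∀ᵐ ω ∂P, |X i ω| ≤ M) (hn : n ≤ r) :
    ∀ᵐ ω ∂P, ∑ i ∈ Icc 1 n, X i ω ≤ n * M := by
  have h : ∀ᵐ ω ∂P, ∀ i ∈ Icc 1 n, X i ω ≤ M := by
    refine (Finset.eventually_all _).2 fun i hi => ?_
    obtain ⟨hi1, hin⟩ := Finset.mem_Icc.1 hi
    filter_upwards [hbdd i hi1 (hin.trans hn)] with ω hω using (le_abs_self _).trans hω
  filter_upwards [h] with ω hω
  simpa using Finset.sum_le_card_nsmul _ _ _ hω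

section IsFiniteMeasure

variable [IsFiniteMeasure P]

lemma integrable_exp_mul_sum_Icc (hmono : ∀ i j, i ≤ j → j ≤ r → ℱ i ≤ ℱ j)
    (hle : ∀ i ≤ r, ℱ i ≤ mΩ) (hadapted : ∀ i ≤ r, StronglyMeasurable[ℱ i] (X i))
    (hbdd : ∀ i, 1 ≤ i → i ≤ r → ∀ᵐ ω ∂P, |X i ω| ≤ M) (hl : 0 ≤ l) :
    Integrable (fun ω => exp (l * ∑ i ∈ Icc 1 r, X i ω)) P := by
  refine integrable_exp_of_ae_le (c := l * (r * M)) ?_ ?_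
  · exact (((stronglyMeasurable_sum_Icc hmono hadapted le_rfl).const_mul l).mono
      (hle r le_rfl)).aestronglyMeasurable
  · filter_upwards [sum_Icc_le hbdd le_rfl] with ω h
    exact mul_le_mul_of_nonneg_left h hl

lemma integrable_bennettExpProcess (hmono : ∀ i j, i ≤ j → j ≤ r → ℱ i ≤ ℱ j)
    (hle : ∀ i ≤ r, ℱ i ≤ mΩ) (hadapted : ∀ i ≤ r, StronglyMeasurable[ℱ i] (X i))
    (hbdd : ∀ i, 1 ≤ i → i ≤ r → ∀ᵐ ω ∂P, |X i ω| ≤ M) (hl : 0 ≤ l) (hn : n ≤ r) :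
    Integrable (bennettExpProcess P ℱ X l M n) P := by
  have hmeas : StronglyMeasurable[ℱ n] fun ω =>
      l * ∑ i ∈ Icc 1 n, X i ω - bennettCoeff l M * condVarSum P ℱ X n ω :=
    ((stronglyMeasurable_sum_Icc hmono hadapted hn).const_mul l).sub
      ((stronglyMeasurable_condVarSum hmono hn).const_mul _)
  refine integrable_exp_of_ae_le (hmeas.mono (hle n hn)).aestronglyMeasurable (c := l * (n * M)) ?_
  filter_upwards [sum_Icc_le hbdd hn, condVarSum_nonneg] with ω hS hV
  have := mul_nonneg (bennettCoeff_nonneg l M) (hV : 0 ≤ condVarSum P ℱ X n ω)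
  nlinarith [mul_le_mul_of_nonneg_left hS hl]

lemma integral_bennettExpProcess_succ_le (hmono : ∀ i j, i ≤ j → j ≤ r → ℱ i ≤ ℱ j)
    (hle : ∀ i ≤ r, ℱ i ≤ mΩ) (hadapted : ∀ i ≤ r, StronglyMeasurable[ℱ i] (X i))
    (hbdd : ∀ i, 1 ≤ i → i ≤ r → ∀ᵐ ω ∂P, |X i ω| ≤ M)
    (hmd : ∀ i, 1 ≤ i → i ≤ r → P[X i|ℱ (i - 1)] =ᵐ[P] 0) (hM : 0 < M) (hl : 0 ≤ l)
    (hn : n + 1 ≤ r) :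
    ∫ ω, bennettExpProcess P ℱ X l M (n + 1) ω ∂P ≤ ∫ ω, bennettExpProcess P ℱ X l M n ω ∂P := by
  let g := bennettCoeff l M
  let C := P[fun ω => X (n + 1) ω ^ 2|ℱ n]
  let f : Ω → ℝ := fun ω =>
    exp (l * ∑ i ∈ Icc 1 n, X i ω - g * condVarSum P ℱ X n ω - g * C ω)
  have hZ_succ : bennettExpProcess P ℱ X l M (n + 1) = f * fun ω => exp (l * X (n + 1) ω) := by
    ext ω
    rw [bennettExpProcess, condVarSum_succ, Finset.sum_Icc_succ_top (Nat.le_add_left 1 n),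
      Pi.mul_apply, ← exp_add]
    dsimp only [f, g, C]
    ring_nf
  have hZ : bennettExpProcess P ℱ X l M n = f * fun ω => exp (g * C ω) := by
    ext ω
    rw [bennettExpProcess, Pi.mul_apply, ← exp_add]
    dsimp only [f, g, C]
    ring_nf
  have hnr : n ≤ r := n.le_succ.trans hn
  have hf : StronglyMeasurable[ℱ n] f :=
    continuous_exp.comp_stronglyMeasurable
      ((((stronglyMeasurable_sum_Icc hmono hadapted hnr).const_mul l).sub
        ((stronglyMeasurable_condVarSum hmono hnr).const_mul g)).sub
        (stronglyMeasurable_condExp.const_mul g))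
  have hY : AEStronglyMeasurable (X (n + 1)) P :=
    ((hadapted _ hn).mono (hle _ hn)).aestronglyMeasurable
  have hYM := hbdd (n + 1) (Nat.le_add_left 1 n) hn
  rw [hZ_succ, hZ]
  refine integral_mul_le_integral_mul_of_condExp_le (hle n hnr) hf
    (ae_of_all _ fun _ => exp_nonneg _) ?_ ?_ ?_
    (condExp_exp_mul_le_exp_bennettCoeff_mul (hle n hnr) hY hl hM hYM
      (hmd (n + 1) (Nat.le_add_left 1 n) hn))
  · exact integrable_exp_mul_of_abs_le hY hl hYM
  · exact hZ_succ ▸ integrable_bennettExpProcess hmono hle hadapted hbdd hl hn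
  · exact hZ ▸ integrable_bennettExpProcess hmono hle hadapted hbdd hl hnr

end IsFiniteMeasure

variable [IsProbabilityMeasure P]

lemma integral_bennettExpProcess_le_one (hmono : ∀ i j, i ≤ j → j ≤ r → ℱ i ≤ ℱ j)
    (hle : ∀ i ≤ r, ℱ i ≤ mΩ) (hadapted : ∀ i ≤ r, StronglyMeasurable[ℱ i] (X i))
    (hbdd : ∀ i, 1 ≤ i → i ≤ r → ∀ᵐ ω ∂P, |X i ω| ≤ M)
    (hmd : ∀ i, 1 ≤ i → i ≤ r → P[X i|ℱ (i - 1)] =ᵐ[P] 0) (hM : 0 < M) (hl : 0 ≤ l) :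
    ∀ n ≤ r, ∫ ω, bennettExpProcess P ℱ X l M n ω ∂P ≤ 1
  | 0, _ => by simp [bennettExpProcess, condVarSum]
  | n + 1, hn =>
    (integral_bennettExpProcess_succ_le hmono hle hadapted hbdd hmd hM hl hn).trans
      (integral_bennettExpProcess_le_one hmono hle hadapted hbdd hmd hM hl n (by omega))

lemma mgf_sum_Icc_le (hmono : ∀ i j, i ≤ j → j ≤ r → ℱ i ≤ ℱ j)
    (hle : ∀ i ≤ r, ℱ i ≤ mΩ) (hadapted : ∀ i ≤ r, StronglyMeasurable[ℱ i] (X i))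
    (hbdd : ∀ i, 1 ≤ i → i ≤ r → ∀ᵐ ω ∂P, |X i ω| ≤ M)
    (hmd : ∀ i, 1 ≤ i → i ≤ r → P[X i|ℱ (i - 1)] =ᵐ[P] 0) (hM : 0 < M) (hl : 0 ≤ l) {v : ℝ}
    (hvar : ∀ᵐ ω ∂P, condVarSum P ℱ X r ω ≤ v) :
    mgf (fun ω => ∑ i ∈ Icc 1 r, X i ω) P l ≤ exp (bennettCoeff l M * v) := by
  have hZ := integrable_bennettExpProcess hmono hle hadapted hbdd hl le_rfl
  calc mgf (fun ω => ∑ i ∈ Icc 1 r, X i ω) P l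
      ≤ ∫ ω, bennettExpProcess P ℱ X l M r ω * exp (bennettCoeff l M * v) ∂P := by
        refine integral_mono_ae ?_ (hZ.mul_const _) ?_
        · exact integrable_exp_mul_sum_Icc hmono hle hadapted hbdd hl
        · filter_upwards [hvar] with ω hω
          rw [bennettExpProcess, ← exp_add, exp_le_exp]
          nlinarith [mul_le_mul_of_nonneg_left hω (bennettCoeff_nonneg l M)]
    _ = (∫ ω, bennettExpProcess P ℱ X l M r ω ∂P) * exp (bennettCoeff l M * v) :=
        integral_mul_const _ _
    _ ≤ exp (bennettCoeff l M * v) :=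
        mul_le_of_le_one_left (exp_nonneg _)
          (integral_bennettExpProcess_le_one hmono hle hadapted hbdd hmd hM hl r le_rfl)

end Martingale

lemma neg_mul_add_bennettCoeff_mul_eq {t M v : ℝ} (ht : 0 ≤ t) (hM : 0 < M) (hv : 0 ≤ v) :
    -(log (1 + t * M / v) / M) * t + bennettCoeff (log (1 + t * M / v) / M) M * v =
      -(v / M ^ 2) * bennett (t * M / v) := by
  rcases hv.eq_or_lt with rfl | hv
  · simp
  rw [bennettCoeff, div_mul_cancel₀ _ hM.ne', exp_log (by positivity), bennett, add_comm _ 1]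
  field_simp
  ring

theorem martingale_bennett_general
    {Ω : Type*} [F : MeasurableSpace Ω] (P : Measure Ω) [IsProbabilityMeasure P]
    (r : ℕ) (ℱ : ℕ → MeasurableSpace Ω)
    (hmono : ∀ i j : ℕ, i ≤ j → j ≤ r → ℱ i ≤ ℱ j)
    (hle : ∀ i : ℕ, i ≤ r → ℱ i ≤ F)
    (X : ℕ → Ω → ℝ)
    (hadapted : ∀ i : ℕ, i ≤ r → StronglyMeasurable[ℱ i] (X i))
    (M σ : ℝ) (hM : 0 < M)
    (hbdd : ∀ i : ℕ, 1 ≤ i → i ≤ r → ∀ᵐ ω ∂P, |X i ω| ≤ M)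
    (hmd : ∀ i : ℕ, 1 ≤ i → i ≤ r → P[X i | ℱ (i - 1)] =ᵐ[P] 0)
    (hvar : ∀ᵐ ω ∂P,
      ∑ i ∈ Finset.Icc 1 r, (P[fun ω' => (X i ω') ^ 2 | ℱ (i - 1)]) ω ≤ σ ^ 2) :
    ∀ t : ℝ, 0 ≤ t →
      (P {ω | t ≤ ∑ i ∈ Finset.Icc 1 r, X i ω}).toReal ≤
        Real.exp (-(σ ^ 2 / M ^ 2) * bennett (t * M / σ ^ 2)) := by
  intro t ht
  set l := log (1 + t * M / σ ^ 2) / M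
  have hl : 0 ≤ l :=
    div_nonneg (log_nonneg (le_add_of_nonneg_right (by positivity))) hM.le
  calc P.real {ω | t ≤ ∑ i ∈ Icc 1 r, X i ω}
      ≤ exp (-l * t) * mgf (fun ω => ∑ i ∈ Icc 1 r, X i ω) P l :=
        measure_ge_le_exp_mul_mgf t hl (integrable_exp_mul_sum_Icc hmono hle hadapted hbdd hl)
    _ ≤ exp (-l * t) * exp (bennettCoeff l M * σ ^ 2) := by
        gcongr
        exact mgf_sum_Icc_le hmono hle hadapted hbdd hmd hM hl hvar
    _ = exp (-(σ ^ 2 / M ^ 2) * bennett (t * M / σ ^ 2)) := by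
        rw [← exp_add, neg_mul_add_bennettCoeff_mul_eq ht hM (sq_nonneg σ)]

/-- Bennett-type inequality for martingale differences (Fan et al.):
if `|X_i| ≤ M` a.s. and `Σ_i E[X_i² | F_{i−1}] ≤ σ²` a.s., then
`Pr[Σ X_i ≥ t] ≤ exp(−(σ²/M²)·𝒞(tM/σ²))`. -/
theorem martingale_bennett
    {Ω : Type*} [F : MeasurableSpace Ω] (P : Measure Ω) [IsProbabilityMeasure P]
    (r : ℕ) (ℱ : ℕ → MeasurableSpace Ω)
    (hℱ0 : ℱ 0 = ⊥)
    (hmono : ∀ i j : ℕ, i ≤ j → j ≤ r → ℱ i ≤ ℱ j)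
    (hle : ∀ i : ℕ, i ≤ r → ℱ i ≤ F)
    (X : ℕ → Ω → ℝ)
    (hX0 : X 0 = 0)
    (hadapted : ∀ i : ℕ, i ≤ r → StronglyMeasurable[ℱ i] (X i))
    (M σ : ℝ) (hM : 0 < M) (hσ : 0 < σ)
    (hbdd : ∀ i : ℕ, 1 ≤ i → i ≤ r → ∀ᵐ ω ∂P, |X i ω| ≤ M)
    (hmd : ∀ i : ℕ, 1 ≤ i → i ≤ r → P[X i | ℱ (i - 1)] =ᵐ[P] 0)
    (hvar : ∀ᵐ ω ∂P,
      ∑ i ∈ Finset.Icc 1 r, (P[fun ω' => (X i ω') ^ 2 | ℱ (i - 1)]) ω ≤ σ ^ 2) :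
    ∀ t : ℝ, 0 ≤ t →
      (P {ω | t ≤ ∑ i ∈ Finset.Icc 1 r, X i ω}).toReal ≤
        Real.exp (-(σ ^ 2 / M ^ 2) * bennett (t * M / σ ^ 2)) :=
  martingale_bennett_general (F := F) P r ℱ hmono hle X hadapted M σ hM hbdd hmd hvar
end
end

section
/- Let 𝒞(x) = (x+1)·ln(x+1) − x and let a ≥ 0. If b ≥ 1, then b·𝒞(a) ≤ 𝒞(a·b) ≤ b²·𝒞(a). If 0 ≤ b ≤ 1, then b²·𝒞(a) ≤ 𝒞(a·b) ≤ b·𝒞(a). -/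
open Real

noncomputable section

/-!
Both sides of each inequality vanish at `a = 0`, and `𝒞' = log (· + 1)`, so it suffices to
compare the derivatives in `a`: `b · log (a b + 1)` against `c · log (a + 1)` for `c = b, b²`.
Monotonicity of `log` handles `c = b`; for `c = b²` the comparison of `log (a b + 1)` with
`b · log (a + 1)` is Bernoulli's inequality `(1 + a)^b ≷ 1 + a b` after taking logarithms.
-/

theorem image_le_of_hasDerivAt_le_on_Ici {f g f' g' : ℝ → ℝ} {x₀ a : ℝ}
    (hf : ∀ x, x₀ ≤ x → HasDerivAt f (f' x) x) (hg : ∀ x, x₀ ≤ x → HasDerivAt g (g' x) x)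
    (h₀ : f x₀ ≤ g x₀) (hderiv : ∀ x, x₀ ≤ x → f' x ≤ g' x) (ha : x₀ ≤ a) : f a ≤ g a :=
  image_le_of_deriv_right_le_deriv_boundary
    (fun x hx => (hf x hx.1).continuousAt.continuousWithinAt)
    (fun x hx => (hf x hx.1).hasDerivWithinAt) h₀
    (fun x hx => (hg x hx.1).continuousAt.continuousWithinAt)
    (fun x hx => (hg x hx.1).hasDerivWithinAt) (fun x hx => hderiv x hx.1) ⟨ha, le_rfl⟩

theorem log_mul_add_one_le_mul_log_add_one {x b : ℝ} (hx : 0 ≤ x) (hb : 1 ≤ b) :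
    log (x * b + 1) ≤ b * log (x + 1) := by
  have bernoulli : 1 + b * x ≤ (1 + x) ^ b := one_add_mul_self_le_rpow_one_add (by linarith) hb
  rw [← log_rpow (by linarith), add_comm x]
  exact log_le_log (by positivity) (by linarith)

theorem mul_log_add_one_le_log_mul_add_one {x b : ℝ} (hx : -1 < x) (hb₀ : 0 ≤ b)
    (hb₁ : b ≤ 1) : b * log (x + 1) ≤ log (x * b + 1) := by
  have bernoulli : (1 + x) ^ b ≤ 1 + b * x := rpow_one_add_le_one_add_mul_self hx.le hb₀ hb₁
  rw [← log_rpow (by linarith), add_comm x]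
  exact log_le_log (rpow_pos_of_pos (by linarith) b) (by linarith)

@[simp]
theorem bennett_zero : bennett 0 = 0 := by simp [bennett]

theorem hasDerivAt_bennett {x : ℝ} (hx : -1 < x) : HasDerivAt bennett (log (x + 1)) x := by
  have hx₁ : x + 1 ≠ 0 := by linarith
  have h : HasDerivAt bennett (1 * log (x + 1) + (x + 1) * (1 / (x + 1)) - 1) x :=
    (((hasDerivAt_id' x).add_const 1).mul (((hasDerivAt_id' x).add_const 1).log hx₁)).sub
      (hasDerivAt_id' x)
  rwa [mul_one_div_cancel hx₁, one_mul, add_sub_cancel_right] at h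

theorem hasDerivAt_bennett_mul_const {x b : ℝ} (hx : -1 < x * b) :
    HasDerivAt (fun a => bennett (a * b)) (b * log (x * b + 1)) x := by
  rw [mul_comm]
  exact (hasDerivAt_bennett hx).comp x (hasDerivAt_mul_const b)

section Comparison

variable {a b c : ℝ}

theorem bennett_mul_le_of_log_le (ha : 0 ≤ a) (hb : 0 ≤ b)
    (hderiv : ∀ x, 0 ≤ x → b * log (x * b + 1) ≤ c * log (x + 1)) :
    bennett (a * b) ≤ c * bennett a :=
  image_le_of_hasDerivAt_le_on_Ici
    (fun x hx => hasDerivAt_bennett_mul_const (by nlinarith))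
    (fun x hx => (hasDerivAt_bennett (by linarith)).const_mul c) (by simp) hderiv ha

theorem le_bennett_mul_of_le_log (ha : 0 ≤ a) (hb : 0 ≤ b)
    (hderiv : ∀ x, 0 ≤ x → c * log (x + 1) ≤ b * log (x * b + 1)) :
    c * bennett a ≤ bennett (a * b) :=
  image_le_of_hasDerivAt_le_on_Ici
    (fun x hx => (hasDerivAt_bennett (by linarith)).const_mul c)
    (fun x hx => hasDerivAt_bennett_mul_const (by nlinarith)) (by simp) hderiv ha

end Comparison

/-- Scaling estimates for the Bennett function: for `a ≥ 0`,
if `b ≥ 1` then `b·𝒞(a) ≤ 𝒞(a·b) ≤ b²·𝒞(a)`, and if `0 ≤ b ≤ 1` then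
`b²·𝒞(a) ≤ 𝒞(a·b) ≤ b·𝒞(a)`. -/
theorem bennett_scaling (a b : ℝ) (ha : 0 ≤ a) :
    (1 ≤ b → b * bennett a ≤ bennett (a * b) ∧ bennett (a * b) ≤ b ^ 2 * bennett a) ∧
    (0 ≤ b → b ≤ 1 → b ^ 2 * bennett a ≤ bennett (a * b) ∧ bennett (a * b) ≤ b * bennett a) := by
  refine ⟨fun hb => ?_, fun hb₀ hb₁ => ?_⟩
  · have hb₀ : 0 ≤ b := by linarith
    refine ⟨le_bennett_mul_of_le_log ha hb₀ fun x hx => ?_,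
      bennett_mul_le_of_log_le ha hb₀ fun x hx => ?_⟩
    · exact mul_le_mul_of_nonneg_left (log_le_log (by linarith) (by nlinarith)) hb₀
    · rw [sq, mul_assoc]
      exact mul_le_mul_of_nonneg_left (log_mul_add_one_le_mul_log_add_one hx hb) hb₀
  · refine ⟨le_bennett_mul_of_le_log ha hb₀ fun x hx => ?_,
      bennett_mul_le_of_log_le ha hb₀ fun x hx => ?_⟩
    · rw [sq, mul_assoc]
      exact mul_le_mul_of_nonneg_left
        (mul_log_add_one_le_log_mul_add_one (by linarith) hb₀ hb₁) hb₀
    · exact mul_le_mul_of_nonneg_left (log_le_log (by nlinarith) (by nlinarith)) hb₀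
end
end

section
/- Let Σ be a finite alphabet, c ≥ 1 and r ≥ 1 integers, and let T : {1,…,c} × Σ → [2^r] be a uniformly random table, where [2^r] is identified with the group of r-bit strings under bitwise XOR ⊕. For a set s ⊆ {1,…,c} × Σ of position characters define h(s) = ⊕_{α∈s} T(α). Let s₁,…,s_t ⊆ {1,…,c} × Σ and let j ∈ {1,…,t}. If every subset B ⊆ {1,…,t} with j ∈ B satisfies that the symmetric difference △_{i∈B} s_i is nonempty, then the random variable h(s_j) is independent of the joint random variable (h(s_i))_{i≠j}. -/
open Finset
open scoped BigOperators Classical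

noncomputable section

/-- Probability of an event with respect to the uniform distribution on a finite type. -/
def unifPr {Ω : Type*} [Fintype Ω] (p : Ω → Prop) : ℝ :=
  ((Finset.univ.filter (fun ω => p ω)).card : ℝ) / (Fintype.card Ω : ℝ)

/-- `r`-bit strings, with bitwise XOR given by addition in `(ZMod 2)^r`. -/
abbrev Word (r : ℕ) : Type := Fin r → ZMod 2

/-- The hash value of a set of position characters: the XOR of its table entries. -/
def hashSet {Sig : Type*} {c r : ℕ} (T : Fin c × Sig → Word r)
    (s : Finset (Fin c × Sig)) : Word r :=
  ∑ α ∈ s, T α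

lemma exists_selector {Sig : Type} [Fintype Sig] [DecidableEq Sig] {c t : ℕ}
    (s : Fin t → Finset (Fin c × Sig)) (j : Fin t)
    (hodd : ∀ B : Finset (Fin t), j ∈ B →
      ∃ α : Fin c × Sig, Odd (B.filter (fun i => α ∈ s i)).card) :
    ∃ x : Fin c × Sig → ZMod 2,
      (∑ α ∈ s j, x α) = 1 ∧ ∀ i : Fin t, i ≠ j → (∑ α ∈ s i, x α) = 0 := by
  classical
  set V := Fin c × Sig → ZMod 2
  let L : {i : Fin t // i ≠ j} → (V →ₗ[ZMod 2] ZMod 2) := fun i =>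
    ∑ α ∈ s i.1, LinearMap.proj α
  let K : V →ₗ[ZMod 2] ZMod 2 := ∑ α ∈ s j, LinearMap.proj α
  have happ : ∀ (u : Finset (Fin c × Sig)) (x : V),
      (∑ α ∈ u, (LinearMap.proj α : V →ₗ[ZMod 2] ZMod 2)) x = ∑ α ∈ u, x α := by
    intro u x
    simp [LinearMap.sum_apply, LinearMap.proj_apply]
  have hzm : ∀ a : ZMod 2, a = 0 ∨ a = 1 := by decide
  have hK : K ∉ Submodule.span (ZMod 2) (Set.range L) := by
    intro hmem
    obtain ⟨cfn, hc⟩ := (Submodule.mem_span_range_iff_exists_fun (ZMod 2)).1 hmem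
    set S : Finset (Fin t) :=
      (univ.filter (fun i : {i : Fin t // i ≠ j} => cfn i = 1)).map
        ⟨Subtype.val, Subtype.val_injective⟩ with hS
    have hjS : j ∉ S := by
      simp only [hS, Finset.mem_map, Function.Embedding.coeFn_mk]
      rintro ⟨⟨i, hi⟩, -, h⟩
      exact hi h
    obtain ⟨α, hα⟩ := hodd (insert j S) (Finset.mem_insert_self _ _)
    set e : V := Pi.single α 1 with he
    have hev : ∀ u : Finset (Fin c × Sig),
        (∑ β ∈ u, e β) = if α ∈ u then (1 : ZMod 2) else 0 := by
      intro u
      have : ∀ β, e β = if β = α then (1 : ZMod 2) else 0 := by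
        intro β; simp [he, Pi.single_apply]
      simp_rw [this]
      exact Finset.sum_ite_eq' u α (fun _ => 1)
    have hcast : (((insert j S).filter (fun i => α ∈ s i)).card : ZMod 2) = 1 := by
      obtain ⟨k, hk⟩ := hα
      rw [hk]; push_cast
      rw [show ((2 : ZMod 2)) = 0 from by decide]; ring
    have hsum : (∑ i ∈ insert j S, (if α ∈ s i then (1 : ZMod 2) else 0)) = 1 := by
      rw [Finset.sum_boole]
      exact_mod_cast hcast
    have hKe : K e = if α ∈ s j then (1 : ZMod 2) else 0 := by
      rw [show K = ∑ α ∈ s j, LinearMap.proj α from rfl, happ, hev]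
    have hLe : ∀ i : {i : Fin t // i ≠ j},
        L i e = if α ∈ s i.1 then (1 : ZMod 2) else 0 := by
      intro i
      rw [show L i = ∑ α ∈ s i.1, LinearMap.proj α from rfl, happ, hev]
    have hSsum : (∑ i ∈ S, (if α ∈ s i then (1 : ZMod 2) else 0)) = K e := by
      rw [hS, Finset.sum_map]
      simp only [Function.Embedding.coeFn_mk]
      rw [Finset.sum_filter]
      have : ∀ i : {i : Fin t // i ≠ j},
          (if cfn i = 1 then (if α ∈ s i.1 then (1 : ZMod 2) else 0) else 0)
            = cfn i • L i e := by
        intro i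
        rcases hzm (cfn i) with h | h <;> simp [h, hLe i]
      rw [Finset.sum_congr rfl (fun i _ => this i)]
      have hsa : (∑ i : {i : Fin t // i ≠ j}, cfn i • L i) e
          = ∑ i : {i : Fin t // i ≠ j}, cfn i • L i e := by
        simp [LinearMap.sum_apply]
      rw [← hsa, hc]
    rw [Finset.sum_insert hjS, hSsum, ← hKe] at hsum
    rcases hzm (K e) with h | h <;> rw [h] at hsum <;> exact absurd hsum (by decide)
  have hnle : ¬ (⨅ i, LinearMap.ker (L i)) ≤ LinearMap.ker K := fun h => hK (mem_span_of_iInf_ker_le_ker h)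
  obtain ⟨x, hx1, hx2⟩ := SetLike.not_le_iff_exists.1 hnle
  refine ⟨x, ?_, ?_⟩
  · have : K x ≠ 0 := fun h => hx2 (LinearMap.mem_ker.2 h)
    have h1 : K x = 1 := by rcases hzm (K x) with h | h; exact absurd h this; exact h
    rw [← happ (s j) x]; exact h1
  · intro i hi
    have := (Submodule.mem_iInf _).1 hx1 ⟨i, hi⟩
    rw [LinearMap.mem_ker] at this
    rw [← happ (s i) x]; exact this

/-- (Thorup–Zhang) For a uniformly random table `T`, if every collection of
the sets `s_i` containing `s_j` has nonempty symmetric difference (i.e. some position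
character lies in an odd number of the chosen sets), then `h(s_j)` is independent of the
joint distribution of the `(h(s_i))_{i ≠ j}`. -/
theorem simple_tabulation_linear_independence
    (Sig : Type) [Fintype Sig] [DecidableEq Sig] (c r t : ℕ) (hc : 1 ≤ c) (hr : 1 ≤ r)
    (s : Fin t → Finset (Fin c × Sig)) (j : Fin t)
    (hodd : ∀ B : Finset (Fin t), j ∈ B →
      ∃ α : Fin c × Sig, Odd (B.filter (fun i => α ∈ s i)).card) :
    ∀ (b : Word r) (g : Fin t → Word r),
      unifPr (fun T : Fin c × Sig → Word r =>
          hashSet T (s j) = b ∧ ∀ i : Fin t, i ≠ j → hashSet T (s i) = g i) =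
        unifPr (fun T : Fin c × Sig → Word r => hashSet T (s j) = b) *
          unifPr (fun T : Fin c × Sig → Word r => ∀ i : Fin t, i ≠ j → hashSet T (s i) = g i) := by
  intro b g
  classical
  obtain ⟨x, hxj, hxi⟩ := exists_selector s j hodd
  set τ : Word r → (Fin c × Sig → Word r) := fun d α => x α • d with hτ
  have hadd : ∀ (T T' : (Fin c × Sig → Word r)) (u : Finset (Fin c × Sig)),
      hashSet (T + T') u = hashSet T u + hashSet T' u := by
    intro T T' u; simpa [hashSet] using Finset.sum_add_distrib
  have hτj : ∀ d, hashSet (τ d) (s j) = d := by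
    intro d; simp [hashSet, hτ, ← Finset.sum_smul, hxj]
  have hτi : ∀ d (i : Fin t), i ≠ j → hashSet (τ d) (s i) = 0 := by
    intro d i hi; simp [hashSet, hτ, ← Finset.sum_smul, hxi i hi]
  have hτadd : ∀ d₁ d₂, τ d₁ + τ d₂ = τ (d₁ + d₂) := by
    intro d₁ d₂; funext α; show x α • d₁ + x α • d₂ = x α • (d₁ + d₂); rw [smul_add]
  have hτ0 : τ 0 = 0 := by funext α; show x α • (0 : Word r) = 0; rw [smul_zero]
  -- bridge from filter-cards (any decidability instance) to Nat.card
  have glue : ∀ (p : (Fin c × Sig → Word r) → Prop) (h : DecidablePred p),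
      (@Finset.filter (Fin c × Sig → Word r) p h univ).card = Nat.card {T : (Fin c × Sig → Word r) // p T} := by
    intro p h
    rw [Finset.filter_congr_decidable, Nat.card_eq_fintype_card, Fintype.card_subtype]
  -- constancy of fibers under translation
  have const : ∀ (Q : (Fin c × Sig → Word r) → Prop), (∀ T d, Q T → Q (T + τ d)) → ∀ b₁ b₂ : Word r,
      Nat.card {T : (Fin c × Sig → Word r) // hashSet T (s j) = b₁ ∧ Q T}
        = Nat.card {T : (Fin c × Sig → Word r) // hashSet T (s j) = b₂ ∧ Q T} := by
    intro Q hQ b₁ b₂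
    refine Nat.card_congr ⟨fun T => ⟨T.1 + τ (b₂ - b₁), ?_⟩,
      fun T => ⟨T.1 + τ (b₁ - b₂), ?_⟩, ?_, ?_⟩
    · refine ⟨?_, hQ T.1 _ T.2.2⟩
      rw [hadd, T.2.1, hτj]; abel
    · refine ⟨?_, hQ T.1 _ T.2.2⟩
      rw [hadd, T.2.1, hτj]; abel
    · intro T
      apply Subtype.ext
      show T.1 + τ (b₂ - b₁) + τ (b₁ - b₂) = T.1
      rw [add_assoc, hτadd, show b₂ - b₁ + (b₁ - b₂) = 0 by abel, hτ0, add_zero]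
    · intro T
      apply Subtype.ext
      show T.1 + τ (b₁ - b₂) + τ (b₂ - b₁) = T.1
      rw [add_assoc, hτadd, show b₁ - b₂ + (b₂ - b₁) = 0 by abel, hτ0, add_zero]
  -- fiberwise decomposition
  have hfib : ∀ (Q : (Fin c × Sig → Word r) → Prop),
      Nat.card {T : (Fin c × Sig → Word r) // Q T}
        = ∑ d : Word r, Nat.card {T : (Fin c × Sig → Word r) // hashSet T (s j) = d ∧ Q T} := by
    intro Q
    have E : {T : (Fin c × Sig → Word r) // Q T} ≃ Σ d : Word r, {T : (Fin c × Sig → Word r) // hashSet T (s j) = d ∧ Q T} :=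
      { toFun := fun T => ⟨hashSet T.1 (s j), T.1, rfl, T.2⟩
        invFun := fun p => ⟨p.2.1, p.2.2.2⟩
        left_inv := fun T => rfl
        right_inv := by
          rintro ⟨d, T, hd, hQT⟩
          subst hd
          rfl }
    rw [Nat.card_congr E, Nat.card_eq_fintype_card, Fintype.card_sigma]
    exact Finset.sum_congr rfl fun d _ => (Nat.card_eq_fintype_card).symm
  have hQinv : ∀ (T : (Fin c × Sig → Word r)) d,
      (∀ i : Fin t, i ≠ j → hashSet T (s i) = g i) →
      (∀ i : Fin t, i ≠ j → hashSet (T + τ d) (s i) = g i) := by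
    intro T d h i hi
    rw [hadd, h i hi, hτi d i hi, add_zero]
  -- the key counting identities
  have key1 :
      Nat.card {T : (Fin c × Sig → Word r) // ∀ i : Fin t, i ≠ j → hashSet T (s i) = g i}
        = Fintype.card (Word r) *
          Nat.card {T : (Fin c × Sig → Word r) // hashSet T (s j) = b ∧
            ∀ i : Fin t, i ≠ j → hashSet T (s i) = g i} := by
    rw [hfib (fun T => ∀ i : Fin t, i ≠ j → hashSet T (s i) = g i)]
    rw [Finset.sum_congr rfl (fun d _ => const _ hQinv d b)]
    rw [Finset.sum_const, Finset.card_univ, smul_eq_mul]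
  have key2 : Fintype.card (Fin c × Sig → Word r) = Fintype.card (Word r) *
      Nat.card {T : (Fin c × Sig → Word r) // hashSet T (s j) = b} := by
    have h0 : Fintype.card (Fin c × Sig → Word r) = Nat.card {T : (Fin c × Sig → Word r) // True} := by
      rw [Nat.card_eq_fintype_card]
      exact (Fintype.card_congr (Equiv.subtypeUnivEquiv (fun _ => trivial))).symm
    rw [h0, hfib (fun _ => True)]
    rw [Finset.sum_congr rfl (fun d _ => const (fun _ => True) (fun _ _ _ => trivial) d b)]
    rw [Finset.sum_const, Finset.card_univ, smul_eq_mul]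
    congr 1
    exact Nat.card_congr ⟨fun T => ⟨T.1, T.2.1⟩, fun T => ⟨T.1, T.2, trivial⟩,
      fun T => rfl, fun T => rfl⟩
  have hOpos : (0 : ℝ) < (Fintype.card (Fin c × Sig → Word r) : ℝ) := by exact_mod_cast Fintype.card_pos
  unfold unifPr
  rw [glue, glue, glue]
  rw [div_mul_div_comm]
  rw [div_eq_div_iff hOpos.ne' (by positivity)]
  have main : Nat.card {T : (Fin c × Sig → Word r) // hashSet T (s j) = b ∧
        ∀ i : Fin t, i ≠ j → hashSet T (s i) = g i} * Fintype.card (Fin c × Sig → Word r)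
      = Nat.card {T : (Fin c × Sig → Word r) // hashSet T (s j) = b} *
        Nat.card {T : (Fin c × Sig → Word r) // ∀ i : Fin t, i ≠ j → hashSet T (s i) = g i} := by
    rw [key2, key1]
    ring
  have mainR : (Nat.card {T : Fin c × Sig → Word r // hashSet T (s j) = b ∧
        ∀ i : Fin t, i ≠ j → hashSet T (s i) = g i} : ℝ) *
        (Fintype.card (Fin c × Sig → Word r) : ℝ)
      = (Nat.card {T : Fin c × Sig → Word r // hashSet T (s j) = b} : ℝ) *
        (Nat.card {T : Fin c × Sig → Word r //
          ∀ i : Fin t, i ≠ j → hashSet T (s i) = g i} : ℝ) := by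
    exact_mod_cast congrArg (fun n : ℕ => (n : ℝ)) main
  beta_reduce
  linear_combination (Fintype.card (Fin c × Sig → Word r) : ℝ) * mainR
end
end

section
/- Let Σ be a finite alphabet, c ≥ 1 an integer, and S ⊆ Σ^c a nonempty finite set of keys, where each key x = (x₁,…,x_c) is identified with its set of position characters {(1,x₁),…,(c,x_c)} ⊆ {1,…,c} × Σ. Let w : Σ^c → ℝ_{≥0} be a weight function, and let A = {(i, x_i) : x ∈ S, 1 ≤ i ≤ c} be the set of position characters occurring in keys of S, with r = |A|. Then there exists an enumeration α₁,…,α_r of A such that for every i ∈ {1,…,r}, the group G_i = {x ∈ S : α_i ∈ x and x ⊆ {α₁,…,α_i}} satisfies Σ_{x∈G_i} w(x) ≤ (max_{x∈S} w(x))^{1/c} · (Σ_{x∈S} w(x))^{1−1/c}. -/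
open Finset
open scoped BigOperators Classical

noncomputable section

/-- The set of position characters of a key `x ∈ Σ^c`, namely `{(1,x₁), …, (c,x_c)}`. -/
def posChars {Sig : Type*} [DecidableEq Sig] {c : ℕ} (x : Fin c → Sig) :
    Finset (Fin c × Sig) :=
  Finset.univ.image (fun i : Fin c => (i, x i))

/-!
Write `M = max_S w`, `W = ∑_S w` and `T = M^(1/c) W^(1-1/c)`, so that `T^c = M W^(c-1)`.
The enumeration is built from the back. If `β` is placed last among the set `B` of characters
not yet placed, its group consists of the keys of `S_B = {x ∈ S : x ⊆ B}` containing `β`, so it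
suffices to find `β ∈ B` whose group inside `S_B` has weight at most `T`. Such a `β` exists by counting:
if every character `(i, a)` of `S_B` had group weight `> T`, each position `i` would carry fewer
than `W'/T` distinct characters, where `W'` is the weight of `S_B`; hence
`W' ≤ |S_B| · M ≤ M · ∏ᵢ |{xᵢ : x ∈ S_B}| < M (W'/T)^c`, i.e. `T^c < M W'^(c-1) ≤ M W^(c-1) = T^c`.
-/

theorem Finset.exists_enumeration_forall_prefix {α : Type*} [DecidableEq α]
    (P : Finset α → α → Prop) (hP : ∀ B : Finset α, B.Nonempty → ∃ b ∈ B, P B b)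
    (B : Finset α) :
    ∃ f : Fin #B → α, Function.Injective f ∧ Set.range f = B ∧
      ∀ i, P ((Iic i).image f) (f i) := by
  suffices ∀ n (B : Finset α), #B = n → ∃ f : Fin n → α, Function.Injective f ∧
      Set.range f = B ∧ ∀ i, P ((Iic i).image f) (f i) from this _ B rfl
  intro n
  induction n with
  | zero =>
    intro B hB
    refine ⟨Fin.elim0, fun i => i.elim0, ?_, fun i => i.elim0⟩
    simp [card_eq_zero.1 hB]
  | succ n ih =>
    intro B hB
    obtain ⟨b, hb, hPb⟩ := hP B (card_pos.1 (by omega))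
    obtain ⟨f, hf, hrange, hPf⟩ := ih (B.erase b) (by rw [card_erase_of_mem hb, hB]; rfl)
    have hsnoc : Set.range (Fin.snoc f b : Fin (n + 1) → α) = B := by
      rw [Fin.range_snoc, hrange, ← coe_insert, insert_erase hb]
    refine ⟨Fin.snoc f b, Fin.snoc_injective_of_injective hf (by simp [hrange]), hsnoc, ?_⟩
    intro i
    induction i using Fin.lastCases with
    | last =>
      have : (Iic (Fin.last n)).image (Fin.snoc f b : Fin (n + 1) → α) = B := by
        apply coe_injective
        rw [coe_image, coe_Iic, ← Fin.top_eq_last, Set.Iic_top, Set.image_univ, hsnoc]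
      simpa [this] using hPb
    | cast j =>
      rw [← Fin.map_castSuccEmb_Iic, map_eq_image, image_image]
      simpa using hPf j

theorem rpow_one_div_mul_rpow_one_sub_one_div_pow {a b : ℝ} (ha : 0 ≤ a) (hb : 0 ≤ b)
    {n : ℕ} (hn : 1 ≤ n) :
    (a ^ ((1 : ℝ) / n) * b ^ (1 - (1 : ℝ) / n)) ^ n = a * b ^ (n - 1) := by
  have hn' : (n : ℝ) ≠ 0 := by positivity
  rw [mul_pow, ← Real.rpow_mul_natCast ha, ← Real.rpow_mul_natCast hb,
    one_div_mul_cancel hn', Real.rpow_one, ← Real.rpow_natCast b (n - 1)]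
  congr 2
  push_cast [hn]
  field_simp

theorem Finset.exists_sum_fiber_le {ι α : Type*} [Fintype ι] [Nonempty ι] [DecidableEq α]
    {S : Finset (ι → α)} (hS : S.Nonempty) {w : (ι → α) → ℝ} {M t : ℝ}
    (hM : ∀ x ∈ S, w x ≤ M) (ht : 0 ≤ t)
    (hMt : M * (∑ x ∈ S, w x) ^ (Fintype.card ι - 1) ≤ t ^ Fintype.card ι) :
    ∃ x ∈ S, ∃ i, ∑ y ∈ S with y i = x i, w y ≤ t := by
  by_contra! h
  set n := Fintype.card ι
  set W := ∑ x ∈ S, w x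
  set D : ι → Finset α := fun i => S.image (· i)
  have hD : ∀ i, #(D i) * t < W := fun i => calc
    #(D i) * t = ∑ _a ∈ D i, t := by rw [sum_const, nsmul_eq_mul]
    _ < ∑ a ∈ D i, ∑ y ∈ S with y i = a, w y := by
      refine sum_lt_sum_of_nonempty (hS.image _) ?_
      simp only [D, forall_mem_image]
      exact fun x hx => h x hx i
    _ = W := sum_fiberwise_of_maps_to (fun x hx => mem_image_of_mem _ hx) w
  have hW : 0 < W := (by positivity : (0 : ℝ) ≤ #(D (Classical.arbitrary ι)) * t).trans_lt (hD _)
  have hWM : W ≤ #S * M := by simpa using sum_le_card_nsmul S w M hM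
  have hS_card : (#S : ℝ) ≤ ∏ i, (#(D i) : ℝ) := by
    have := card_le_card (show S ⊆ Fintype.piFinset D from fun x hx =>
      Fintype.mem_piFinset.2 fun i => mem_image_of_mem _ hx)
    exact_mod_cast this.trans_eq (Fintype.card_piFinset D)
  have hMpos : 0 < M := pos_of_mul_pos_right (hW.trans_le hWM) (Nat.cast_nonneg _)
  have htpos : 0 < t := by
    refine lt_of_pow_lt_pow_left₀ n ht ?_
    rw [zero_pow Fintype.card_ne_zero]
    exact (by positivity : 0 < M * W ^ (n - 1)).trans_le hMt
  have hpow : W ^ n = W * W ^ (n - 1) := by rw [← pow_succ', Nat.sub_add_cancel Fintype.card_pos]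
  have : W * t ^ n < W * t ^ n := calc
    W * t ^ n ≤ M * (∏ i, (#(D i) : ℝ)) * t ^ n := by
      gcongr
      linarith [mul_le_mul_of_nonneg_right hS_card hMpos.le]
    _ = M * ∏ i, (#(D i) * t) := by
      rw [prod_mul_distrib, prod_const, card_univ, mul_assoc]
    _ < M * ∏ _i : ι, W := by
      gcongr
      refine prod_lt_prod_of_nonempty (fun i _ => mul_pos ?_ htpos) (fun i _ => hD i) univ_nonempty
      simpa [D] using hS.image (· i)
    _ = W * (M * W ^ (n - 1)) := by
      rw [prod_const, card_univ, hpow]; ring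
    _ ≤ W * t ^ n := by gcongr
  exact lt_irrefl _ this

theorem mem_posChars {Sig : Type*} [DecidableEq Sig] {c : ℕ} {x : Fin c → Sig}
    {p : Fin c × Sig} : p ∈ posChars x ↔ x p.1 = p.2 := by
  simp [posChars, Prod.ext_iff, eq_comm]

theorem exists_mem_sum_group_le {Sig : Type} [DecidableEq Sig] {c : ℕ} (hc : 1 ≤ c)
    (S : Finset (Fin c → Sig)) (hS : S.Nonempty) (w : (Fin c → Sig) → ℝ) (hw : ∀ x, 0 ≤ w x)
    {B : Finset (Fin c × Sig)} (hB : B.Nonempty) :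
    ∃ β ∈ B, ∑ x ∈ S with β ∈ posChars x ∧ posChars x ⊆ B, w x ≤
      (S.sup' hS w) ^ ((1 : ℝ) / c) * (∑ x ∈ S, w x) ^ (1 - (1 : ℝ) / c) := by
  have : Nonempty (Fin c) := ⟨⟨0, hc⟩⟩
  have hM : 0 ≤ S.sup' hS w := (hw _).trans (le_sup' w hS.choose_spec)
  have hW : 0 ≤ ∑ x ∈ S, w x := sum_nonneg fun x _ => hw x
  set S' := S.filter (posChars · ⊆ B)
  have hgroup : ∀ β, S.filter (fun x => β ∈ posChars x ∧ posChars x ⊆ B) =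
      S'.filter (β ∈ posChars ·) := fun β => by
    rw [filter_filter]; simp only [and_comm]
  simp only [hgroup]
  rcases S'.eq_empty_or_nonempty with hS' | hS'
  · obtain ⟨β, hβ⟩ := hB
    exact ⟨β, hβ, by rw [hS', filter_empty, sum_empty]; positivity⟩
  obtain ⟨x, hx, i, hle⟩ := exists_sum_fiber_le hS' (M := S.sup' hS w)
    (t := S.sup' hS w ^ ((1 : ℝ) / c) * (∑ x ∈ S, w x) ^ (1 - (1 : ℝ) / c))
    (fun x hx => le_sup' w (mem_filter.1 hx).1) (by positivity) (by
      rw [Fintype.card_fin, rpow_one_div_mul_rpow_one_sub_one_div_pow hM hW hc]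
      gcongr
      · exact sum_nonneg fun x _ => hw x
      · exact fun x _ _ => hw x
      · exact filter_subset _ _)
  refine ⟨(i, x i), (mem_filter.1 hx).2 (mem_posChars.2 rfl), ?_⟩
  simpa only [mem_posChars, eq_comm] using hle

/-- Ordering of position characters with small weighted groups: there is an
enumeration `α₁, …, α_r` of the position characters of `S` such that every group
`G_i = {x ∈ S : α_i ∈ x ⊆ {α₁,…,α_i}}` has total weight at most
`(max_{x∈S} w(x))^{1/c} · (Σ_{x∈S} w(x))^{1−1/c}`. -/
theorem ordering_with_small_groups
    (Sig : Type) [Fintype Sig] [DecidableEq Sig] (c : ℕ) (hc : 1 ≤ c)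
    (S : Finset (Fin c → Sig)) (hS : S.Nonempty)
    (w : (Fin c → Sig) → ℝ) (hw : ∀ x, 0 ≤ w x) :
    ∃ α : Fin (S.biUnion posChars).card → Fin c × Sig,
      Function.Injective α ∧
      (∀ i, α i ∈ S.biUnion posChars) ∧
      (∀ p ∈ S.biUnion posChars, ∃ i, α i = p) ∧
      ∀ i : Fin (S.biUnion posChars).card,
        ∑ x ∈ S.filter (fun x =>
            α i ∈ posChars x ∧ ∀ p ∈ posChars x, ∃ j, j ≤ i ∧ α j = p), w x ≤
          (S.sup' hS w) ^ ((1 : ℝ) / c) * (∑ x ∈ S, w x) ^ (1 - (1 : ℝ) / c) := by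
  obtain ⟨α, hinj, hrange, hsmall⟩ := exists_enumeration_forall_prefix _
    (fun _ => exists_mem_sum_group_le hc S hS w hw) (S.biUnion posChars)
  refine ⟨α, hinj, fun i => mem_coe.1 (hrange ▸ Set.mem_range_self i),
    fun p hp => (Set.ext_iff.1 hrange p).2 hp, fun i => ?_⟩
  convert hsmall i using 4 with x
  simp [subset_iff, and_comm]
end
end

section
/- Let Σ be a finite alphabet, c ≥ 1 an integer, ℓ ≥ 2 an even integer, w₁,…,w_ℓ : Σ^c → ℝ weight functions, and A₁,…,A_ℓ ⊆ Σ^c sets of keys. For keys x₁,…,x_ℓ ∈ Σ^c, say that x₁ ⊕ ⋯ ⊕ x_ℓ = ∅ if the symmetric difference of the position-character sets of x₁,…,x_ℓ is empty; equivalently, for every position i ∈ {1,…,c} and every character a ∈ Σ, the number of indices k with (x_k)_i = a is even. Then Σ over all tuples (x₁,…,x_ℓ) ∈ A₁ × ⋯ × A_ℓ with x₁ ⊕ ⋯ ⊕ x_ℓ = ∅ of ∏_{k=1}^ℓ w_k(x_k) is at most ((ℓ−1)!!)^c · ∏_{k=1}^ℓ √(Σ_{x∈A_k} w_k(x)²),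 where (ℓ−1)!! denotes the double factorial of ℓ−1. -/
/-! Extend `wₖ` by zero outside `Aₖ`, split every key into its first character and the
remaining `c - 1` characters, and induct on `c`. For fixed first characters `a₁, …, a_ℓ`, the
induction hypothesis bounds the sum over the remaining positions by `((ℓ-1)‼)^(c-1) ∏ₖ Nₖ(aₖ)`,
where `Nₖ(t)` is the `L²` norm of `wₖ` on the keys starting with `t`, and the parity condition
at the first position says that `(a₁, …, a_ℓ)` takes every value an even number of times.
This reduces everything to the one-position bound `∑_{a even} ∏ₖ Gₖ(aₖ) ≤ (ℓ-1)‼ ∏ₖ ‖Gₖ‖₂`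
for nonnegative `Gₖ`, proved by induction on `ℓ`: `a₁` equals some `aⱼ` with `j ≠ 1`
(`ℓ - 1` choices), summing out their common value costs `∑ₜ G₁(t) Gⱼ(t) ≤ ‖G₁‖₂ ‖Gⱼ‖₂` by
Cauchy–Schwarz, and the other `ℓ - 2` coordinates again take every value an even number of
times. -/

open Finset
open scoped Classical Nat

theorem sum_le_sum_sum_filter_of_forall_exists {ι κ M : Type*} [AddCommMonoid M]
    [PartialOrder M] [IsOrderedAddMonoid M] {s : Finset ι} {t : Finset κ} {p : κ → ι → Prop}
    [∀ j, DecidablePred (p j)] {f : ι → M} (hf : ∀ i ∈ s, 0 ≤ f i)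
    (h : ∀ i ∈ s, ∃ j ∈ t, p j i) :
    ∑ i ∈ s, f i ≤ ∑ j ∈ t, ∑ i ∈ s with p j i, f i := by
  calc ∑ i ∈ s, f i ≤ ∑ i ∈ s, ∑ j ∈ t with p j i, f i := sum_le_sum fun i hi => by
        obtain ⟨j, hj, hpj⟩ := h i hi
        exact single_le_sum (f := fun _ => f i) (fun _ _ => hf i hi) (mem_filter.mpr ⟨hj, hpj⟩)
    _ = ∑ j ∈ t, ∑ i ∈ s with p j i, f i := by
        simp_rw [sum_filter]
        exact sum_comm

theorem sum_filter_piFinset_prod_eq {ι β R : Type*} [Fintype ι] [DecidableEq ι] [Fintype β]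
    [CommSemiring R] (A : ι → Finset β) (w : ι → β → R)
    (p : (ι → β) → Prop) [DecidablePred p] :
    ∑ x ∈ (Fintype.piFinset A).filter p, ∏ k, w k (x k) =
      ∑ x with p x, ∏ k, if x k ∈ A k then w k (x k) else 0 := by
  simp only [prod_ite_zero, mem_univ, true_implies, ← sum_filter, filter_filter]
  exact sum_congr (by ext; simp [and_comm]) fun _ _ => rfl

section Tuples

variable {α β : Type*} [Fintype α] [AddCommMonoid β] {n : ℕ}

theorem sum_tuples_eq_sum_insertNth (j : Fin (n + 1)) (f : (Fin (n + 1) → α) → β) :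
    ∑ a, f a = ∑ t, ∑ b, f (j.insertNth t b) := by
  rw [← Fintype.sum_prod_type']
  exact (Fintype.sum_equiv (Fin.insertNthEquiv _ j) _ _ fun _ => rfl).symm

theorem sum_tuples_ite_eq_sum_cons_insertNth [DecidableEq α] (j : Fin (n + 1))
    (f : (Fin (n + 2) → α) → β) :
    ∑ a, (if a j.succ = a 0 then f a else 0) =
      ∑ t, ∑ b : Fin n → α, f (Fin.cons t (j.insertNth t b)) := by
  rw [sum_tuples_eq_sum_insertNth 0]
  refine sum_congr rfl fun t _ => ?_
  rw [sum_tuples_eq_sum_insertNth j, sum_comm]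
  simp [Fin.insertNth_zero']

end Tuples

section EvenFibers

variable {α : Type*} [DecidableEq α]

def HasEvenFibers {ι : Type*} [Fintype ι] (a : ι → α) : Prop :=
  ∀ t, Even #{k | a k = t}

theorem HasEvenFibers.exists_succ_eq {n : ℕ} {a : Fin (n + 1) → α} (h : HasEvenFibers a) :
    ∃ j : Fin n, a j.succ = a 0 := by
  have hpos : 0 < #{k | a k = a 0} := card_pos.mpr ⟨0, by simp⟩
  obtain ⟨r, hr⟩ := h (a 0)
  obtain ⟨k, hk, hk0⟩ := exists_mem_ne (by omega : 1 < #{k | a k = a 0}) 0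
  obtain ⟨j, rfl⟩ := Fin.exists_succ_eq.mpr hk0
  exact ⟨j, (mem_filter.mp hk).2⟩

theorem hasEvenFibers_cons_insertNth {n : ℕ} (j : Fin (n + 1)) (t : α) (b : Fin n → α) :
    HasEvenFibers (Fin.cons t (j.insertNth t b) : Fin (n + 2) → α) ↔ HasEvenFibers b := by
  refine forall_congr' fun s => ?_
  rw [card_filter, card_filter, Fin.sum_univ_succ, Fin.sum_univ_succAbove _ j]
  simp only [Fin.cons_zero, Fin.cons_succ, Fin.insertNth_apply_same,
    Fin.insertNth_apply_succAbove]
  split_ifs <;> simp [Nat.even_add, ← add_assoc]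

theorem sum_hasEvenFibers_prod_le [Fintype α] : ∀ {n : ℕ} (G : Fin n → α → ℝ),
    (∀ k t, 0 ≤ G k t) →
      ∑ a with HasEvenFibers a, ∏ k, G k (a k) ≤ (n - 1)‼ * ∏ k, √(∑ t, G k t ^ 2)
  | 0, G, _ => by simp [HasEvenFibers]
  | 1, G, _ => by
    rw [sum_eq_zero fun a ha => ((mem_filter.mp ha).2.exists_succ_eq.choose).elim0]
    positivity
  | n + 2, G, hG => by
    have hpair (j : Fin (n + 1)) :
        ∑ a ∈ {a | HasEvenFibers a} with a j.succ = a 0, ∏ k, G k (a k) =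
          (∑ t, G 0 t * G j.succ t) *
            ∑ b with HasEvenFibers b, ∏ m, G (j.succAbove m).succ (b m) := by
      calc ∑ a ∈ {a | HasEvenFibers a} with a j.succ = a 0, ∏ k, G k (a k)
          = ∑ a, if a j.succ = a 0 then
              (if HasEvenFibers a then ∏ k, G k (a k) else 0) else 0 := by
            rw [sum_filter, sum_filter]
            exact sum_congr rfl fun a _ => by split_ifs <;> rfl
        _ = ∑ t, ∑ b : Fin n → α, G 0 t * G j.succ t *
              (if HasEvenFibers b then ∏ m, G (j.succAbove m).succ (b m) else 0) := by
            rw [sum_tuples_ite_eq_sum_cons_insertNth]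
            simp only [hasEvenFibers_cons_insertNth, Fin.prod_univ_succ,
              Fin.prod_univ_succAbove _ j, Fin.cons_zero, Fin.cons_succ,
              Fin.insertNth_apply_same, Fin.insertNth_apply_succAbove, mul_ite, mul_zero,
              mul_assoc]
        _ = _ := by simp_rw [← mul_sum, ← sum_filter, sum_mul]
    calc ∑ a with HasEvenFibers a, ∏ k, G k (a k)
        ≤ ∑ j : Fin (n + 1), ∑ a ∈ {a | HasEvenFibers a} with a j.succ = a 0,
            ∏ k, G k (a k) :=
          sum_le_sum_sum_filter_of_forall_exists (fun a _ => prod_nonneg fun k _ => hG k _)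
            fun a ha => by
              obtain ⟨j, hj⟩ := (mem_filter.mp ha).2.exists_succ_eq
              exact ⟨j, mem_univ _, hj⟩
      _ ≤ ∑ j : Fin (n + 1), (n - 1)‼ * ∏ k, √(∑ t, G k t ^ 2) := sum_le_sum fun j _ => by
          rw [hpair j]
          calc _ ≤ (√(∑ t, G 0 t ^ 2) * √(∑ t, G j.succ t ^ 2)) *
                ((n - 1)‼ * ∏ m, √(∑ t, G (j.succAbove m).succ t ^ 2)) :=
                mul_le_mul (Real.sum_mul_le_sqrt_mul_sqrt _ _ _)
                  (sum_hasEvenFibers_prod_le _ fun m => hG _)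
                  (sum_nonneg fun b _ => prod_nonneg fun m _ => hG _ _) (by positivity)
            _ = _ := by rw [Fin.prod_univ_succ, Fin.prod_univ_succAbove _ j]; ring
      _ = (n + 2 - 1)‼ * ∏ k, √(∑ t, G k t ^ 2) := by
          rw [sum_const, card_univ, Fintype.card_fin, nsmul_eq_mul, ← mul_assoc,
            show n + 2 - 1 = n + 1 by omega, Nat.doubleFactorial_add_one]
          push_cast
          ring

theorem sum_hasEvenFibers_columns_succ {ℓ c : ℕ} [Fintype α] {β : Type*} [AddCommMonoid β]
    (f : (Fin ℓ → Fin (c + 1) → α) → β) :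
    ∑ x with ∀ i, HasEvenFibers (x · i), f x =
      ∑ a with HasEvenFibers a, ∑ x : Fin ℓ → Fin c → α with ∀ i, HasEvenFibers (x · i),
        f fun k => Fin.cons (a k) (x k) := by
  let e : (Fin ℓ → α) × (Fin ℓ → Fin c → α) ≃ (Fin ℓ → Fin (c + 1) → α) :=
    (Equiv.arrowProdEquivProdArrow _ _ _).symm.trans
      (Equiv.piCongrRight fun _ => Fin.consEquiv fun _ => α)
  rw [← sum_product']
  refine (sum_equiv e (fun p => ?_) fun _ _ => rfl).symm
  simp [e, Fin.forall_fin_succ]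

theorem sum_hasEvenFibers_columns_prod_le [Fintype α] {ℓ : ℕ} : ∀ {c : ℕ}
    (F : Fin ℓ → (Fin c → α) → ℝ),
    ∑ x : Fin ℓ → Fin c → α with ∀ i, HasEvenFibers (x · i), ∏ k, F k (x k) ≤
      ((ℓ - 1)‼ : ℝ) ^ c * ∏ k, √(∑ y, F k y ^ 2)
  | 0, F => by
    simp only [IsEmpty.forall_iff, filter_true, univ_unique, sum_singleton, pow_zero, one_mul,
      Pi.default_apply, Real.sqrt_sq_eq_abs, ← abs_prod]
    exact le_abs_self _
  | c + 1, F => by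
    set N : Fin ℓ → α → ℝ := fun k t => √(∑ y, F k (Fin.cons t y) ^ 2)
    have hN (k : Fin ℓ) : ∑ t, N k t ^ 2 = ∑ y, F k y ^ 2 := by
      simp only [N, Real.sq_sqrt (sum_nonneg fun _ _ => sq_nonneg _)]
      simpa only [Fin.insertNth_zero'] using
        (sum_tuples_eq_sum_insertNth 0 fun y => F k y ^ 2).symm
    calc ∑ x : Fin ℓ → Fin (c + 1) → α with ∀ i, HasEvenFibers (x · i), ∏ k, F k (x k)
        = ∑ a with HasEvenFibers a, ∑ x : Fin ℓ → Fin c → α with ∀ i, HasEvenFibers (x · i),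
            ∏ k, F k (Fin.cons (a k) (x k)) := sum_hasEvenFibers_columns_succ _
      _ ≤ ∑ a with HasEvenFibers a, ((ℓ - 1)‼ : ℝ) ^ c * ∏ k, N k (a k) :=
          sum_le_sum fun a _ =>
            sum_hasEvenFibers_columns_prod_le fun k y => F k (Fin.cons (a k) y)
      _ ≤ ((ℓ - 1)‼ : ℝ) ^ c * ((ℓ - 1)‼ * ∏ k, √(∑ t, N k t ^ 2)) := by
          rw [← mul_sum]
          gcongr
          exact sum_hasEvenFibers_prod_le N fun _ _ => Real.sqrt_nonneg _
      _ = ((ℓ - 1)‼ : ℝ) ^ (c + 1) * ∏ k, √(∑ y, F k y ^ 2) := by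
          simp only [hN]
          ring

end EvenFibers

theorem weighted_collision_bound_general
    (Sig : Type) [Fintype Sig] [DecidableEq Sig] (c ℓ : ℕ)
    (w : Fin ℓ → (Fin c → Sig) → ℝ) (A : Fin ℓ → Finset (Fin c → Sig)) :
    ∑ x ∈ (Fintype.piFinset fun k : Fin ℓ => A k).filter
        (fun x : Fin ℓ → (Fin c → Sig) =>
          ∀ (i : Fin c) (a : Sig), Even (Finset.univ.filter (fun kk : Fin ℓ => x kk i = a)).card),
        ∏ kk : Fin ℓ, w kk (x kk) ≤
      (Nat.doubleFactorial (ℓ - 1) : ℝ) ^ c * ∏ kk : Fin ℓ, Real.sqrt (∑ y ∈ A kk, w kk y ^ 2) := by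
  rw [sum_filter_piFinset_prod_eq]
  convert sum_hasEvenFibers_columns_prod_le fun k y => if y ∈ A k then w k y else 0 using 4
  · exact Iff.rfl
  · simp

/-- Weighted collision bound: the sum over all tuples
`(x₁,…,x_ℓ) ∈ A₁ × ⋯ × A_ℓ` whose position-character sets have empty symmetric difference
(every character occurs an even number of times in every position) of `∏ w_k(x_k)` is at
most `((ℓ−1)‼)^c · ∏_k √(Σ_{x∈A_k} w_k(x)²)`. -/
theorem weighted_collision_bound
    (Sig : Type) [Fintype Sig] [DecidableEq Sig] (c ℓ : ℕ) (hc : 1 ≤ c)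
    (hℓ2 : 2 ≤ ℓ) (hℓeven : Even ℓ)
    (w : Fin ℓ → (Fin c → Sig) → ℝ) (A : Fin ℓ → Finset (Fin c → Sig)) :
    ∑ x ∈ (Fintype.piFinset fun k : Fin ℓ => A k).filter
        (fun x : Fin ℓ → (Fin c → Sig) =>
          ∀ (i : Fin c) (a : Sig), Even (Finset.univ.filter (fun kk : Fin ℓ => x kk i = a)).card),
        ∏ kk : Fin ℓ, w kk (x kk) ≤
      (Nat.doubleFactorial (ℓ - 1) : ℝ) ^ c * ∏ kk : Fin ℓ, Real.sqrt (∑ y ∈ A kk, w kk y ^ 2) :=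
  weighted_collision_bound_general Sig c ℓ w A
end

section
/- Let σ² > 0 and t > 0 be reals, and set s = max{σ², √(t·σ²)}. Then s·𝒞(t/s) ≥ σ²·𝒞(t/σ²)/4. -/
/-!
Writing `t = σ² r²`, the variance is unchanged when `r ≤ 1`, and otherwise `s = σ² r`,
`t / s = r`, `t / σ² = r²`, so the claim becomes `𝒞(r²) ≤ 4 r 𝒞(r)`. That follows from
`log (1 + r²) ≤ min (r², 2 log (1 + r))` together with `log (1 + r) ≥ 2r / (r + 2)`.
-/

open Real

noncomputable section

lemma bennett_nonneg {x : ℝ} (hx : -1 < x) : 0 ≤ bennett x := by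
  have hx1 : 0 < x + 1 := by linarith
  have hlog := one_sub_inv_le_log_of_pos hx1
  have hx : (x + 1) * (1 - (x + 1)⁻¹) = x := by field_simp; ring
  unfold bennett
  nlinarith [mul_le_mul_of_nonneg_left hlog hx1.le]

lemma bennett_sq_le_four_mul {r : ℝ} (hr : 0 ≤ r) : bennett (r ^ 2) ≤ 4 * r * bennett r := by
  set L := log (1 + r)
  set M := log (1 + r ^ 2)
  have hM : M ≤ r ^ 2 := by linarith [log_le_sub_one_of_pos (by positivity : 0 < 1 + r ^ 2)]
  have hML : M ≤ 2 * L :=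
    calc M ≤ log ((1 + r) ^ 2) := log_le_log (by positivity) (by nlinarith)
      _ = 2 * L := by rw [log_pow, Nat.cast_ofNat]
  have hL : 2 * r ≤ (r + 2) * L := by
    have h := le_log_one_add_of_nonneg hr
    rw [div_le_iff₀ (by positivity)] at h
    linarith
  simp only [bennett, add_comm _ (1 : ℝ)]
  -- 𝒞(r²) = r² M + (M - r²) ≤ 2 r² L = 2r · (r L) ≤ 2r · (2 (r + 1) L - 2r) = 4r 𝒞(r)
  nlinarith [mul_le_mul_of_nonneg_left hML (sq_nonneg r), mul_le_mul_of_nonneg_left hL hr]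

/-- Increasing the variance to `s = max{σ², √(t·σ²)}` loses at most a
factor `4`: `s·𝒞(t/s) ≥ σ²·𝒞(t/σ²)/4`. -/
theorem bennett_increase_variance (σ2 t : ℝ) (hσ2 : 0 < σ2) (ht : 0 < t) :
    σ2 * bennett (t / σ2) / 4 ≤
      max σ2 (Real.sqrt (t * σ2)) * bennett (t / max σ2 (Real.sqrt (t * σ2))) := by
  obtain ⟨r, hr, rfl⟩ : ∃ r ≥ 0, t = σ2 * r ^ 2 :=
    ⟨√(t / σ2), sqrt_nonneg _, by rw [sq_sqrt (by positivity)]; field_simp⟩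
  have hsqrt : √(σ2 * r ^ 2 * σ2) = σ2 * r := by
    rw [show σ2 * r ^ 2 * σ2 = (σ2 * r) ^ 2 by ring]
    exact sqrt_sq (by positivity)
  have hdiv : σ2 * r ^ 2 / σ2 = r ^ 2 := by field_simp
  rw [hsqrt, hdiv]
  rcases le_total r 1 with hr1 | hr1
  · rw [max_eq_left (by nlinarith), hdiv]
    nlinarith [bennett_nonneg (x := r ^ 2) (by linarith [sq_nonneg r])]
  · have hr0 : r ≠ 0 := by positivity
    have hdiv' : σ2 * r ^ 2 / (σ2 * r) = r := by field_simp
    rw [max_eq_right (by nlinarith), hdiv']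
    nlinarith [bennett_sq_le_four_mul hr]
end
end
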